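/- arXiv:1003.3950 — 7 statements merged into one kernel-verified Lean document; each statement's English description precedes it below -/
import Mathlib

section
/- For every integer D ≥ 2 and every p < 1, P_p-almost surely there exists no 1-Lipschitz injection from Z^2 into the set W_p(Z^D) of open sites of site percolation on Z^D. (Equivalently, p_c(2, D, 1) = 1.) -/
open MeasureTheory

/-- The ℓ¹-norm of an integer vector. -/
def norm1 {n : ℕ} (x : Fin n → ℤ) : ℤ := ∑ i, |x i|

/-- `μ` is a product Bernoulli(`p`) measure on site configurations: a probability
measure under which the states of finitely many sites are independent, each site
being open (`true`) with probability `p`. -/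
def IsBernoulli {S : Type*} (p : ℝ) (μ : Measure (S → Bool)) : Prop :=
  IsProbabilityMeasure μ ∧
    ∀ (A : Finset S) (b : S → Bool),
      μ {ω | ∀ s ∈ A, ω s = b s} = ∏ s ∈ A, ENNReal.ofReal (if b s then p else 1 - p)

/-- `f : ℤ^d → ℤ^D` is `M`-Lipschitz: images of ℓ¹-neighbours are at ℓ¹-distance
at most `M`. -/
def IsLip {d D : ℕ} (M : ℕ) (f : (Fin d → ℤ) → (Fin D → ℤ)) : Prop :=
  ∀ x y, norm1 (x - y) = 1 → norm1 (f x - f y) ≤ (M : ℤ)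

/-!
An injective 1-Lipschitz map `f : ℤ² → ℤ^D` sends lattice edges to ℓ¹-unit steps, and, since
a nonzero sum of two unit vectors determines them up to order, injectivity forces every unit
square to go to a unit square. Hence `f (i, j) = f (i, 0) + f (0, j) - f (0, 0)`: on the box
`[0, n]²`, `f` is determined by `f (0, 0)` and the `2n` unit steps along the two axes. Given
`f (0, 0) = c`, there are thus at most `K ^ (2n)` candidate images of the box, each consisting
of `(n + 1)²` sites that must all be open, so the event has probability at most
`K ^ (2n) p ^ ((n + 1)²) → 0`. A countable union over `c` finishes the proof.
-/

open Function Filter Topology Finset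
open scoped ENNReal

section Norm1

variable {D : ℕ}

lemma norm1_eq_zero_iff {x : Fin D → ℤ} : norm1 x = 0 ↔ x = 0 := by
  simp [norm1, Finset.sum_eq_zero_iff_of_nonneg, funext_iff]

lemma abs_apply_le_norm1 (x : Fin D → ℤ) (i : Fin D) : |x i| ≤ norm1 x :=
  single_le_sum (fun j _ => abs_nonneg (x j)) (mem_univ i)

lemma norm1_fin_two (x : Fin 2 → ℤ) : norm1 x = |x 0| + |x 1| := by
  simp [norm1, Fin.sum_univ_two]

lemma abs_apply_eq_one_of_norm1_eq_one {u : Fin D → ℤ} (hu : norm1 u = 1) {i : Fin D}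
    (hi : u i ≠ 0) : |u i| = 1 :=
  le_antisymm (hu ▸ abs_apply_le_norm1 u i) (Int.one_le_abs hi)

lemma eq_single_of_norm1_eq_one {u : Fin D → ℤ} (hu : norm1 u = 1) {i : Fin D} (hi : u i ≠ 0) :
    u = Pi.single i (u i) := by
  ext j
  rcases eq_or_ne j i with rfl | hji
  · simp
  · have hsum : |u i| + |u j| ≤ 1 :=
      hu ▸ add_le_sum (fun k _ => abs_nonneg (u k)) (mem_univ i) (mem_univ j) hji.symm
    have := abs_apply_eq_one_of_norm1_eq_one hu hi
    rw [Pi.single_eq_of_ne hji]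
    exact abs_nonpos_iff.1 (by linarith)

lemma eq_or_eq_of_add_eq_add {u v u' v' : Fin D → ℤ} (hu : norm1 u = 1) (hv : norm1 v = 1)
    (hu' : norm1 u' = 1) (hv' : norm1 v' = 1) (h : u + v = u' + v') (h0 : u' + v' ≠ 0) :
    u' = u ∨ u' = v := by
  obtain ⟨i, hi⟩ : ∃ i, u' i ≠ 0 := by
    by_contra! h'
    simp [norm1_eq_zero_iff.2 (funext h')] at hu'
  have hv'i : v' i ≠ -u' i := fun hv'i => h0 <| by
    rw [eq_single_of_norm1_eq_one hu' hi, eq_single_of_norm1_eq_one hv' (i := i) (by simpa [hv'i]),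
      hv'i, ← Pi.single_add, add_neg_cancel, Pi.single_zero]
  -- `u' = ±eᵢ` and `v' i ≠ -u' i`, so `u i + v i ∈ {u' i, 2 u' i}` forces `u i` or `v i` to be `u' i`.
  have hsum : u i + v i = u' i + v' i := congrFun h i
  have hs := abs_apply_eq_one_of_norm1_eq_one hu' hi
  have hui := abs_le.1 (hu ▸ abs_apply_le_norm1 u i)
  have hvi := abs_le.1 (hv ▸ abs_apply_le_norm1 v i)
  have hv'i' := abs_le.1 (hv' ▸ abs_apply_le_norm1 v' i)
  have hmatch {x : Fin D → ℤ} (hx : norm1 x = 1) (hxi : x i = u' i) : u' = x := by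
    rw [eq_single_of_norm1_eq_one hu' hi, eq_single_of_norm1_eq_one hx (hxi ▸ hi), hxi]
  have : u i = u' i ∨ v i = u' i := by
    rcases abs_eq (zero_le_one' ℤ) |>.1 hs with hs | hs <;> omega
  exact this.imp (hmatch hu) (hmatch hv)

def unitSphere (D : ℕ) : Set (Fin D → ℤ) := {u | norm1 u = 1}

lemma finite_unitSphere : (unitSphere D).Finite :=
  (Set.Finite.pi fun _ => Set.finite_Icc (-1 : ℤ) 1).subset fun u hu =>
    Set.mem_univ_pi.2 fun i => abs_le.1 (hu ▸ abs_apply_le_norm1 u i)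

end Norm1

section Grid

variable {G : Type*} [AddCommGroup G]

lemma eq_add_sub_of_sub_succ_eq {h : ℕ → ℕ → G}
    (hh : ∀ i j, h (i + 1) (j + 1) - h (i + 1) j = h i (j + 1) - h i j) (i j : ℕ) :
    h i j = h i 0 + h 0 j - h 0 0 := by
  have hstep : ∀ j, h i (j + 1) - h i j = h 0 (j + 1) - h 0 j := by
    intro j
    induction i with
    | zero => rfl
    | succ i ih => rw [hh, ih]
  suffices h i j - h i 0 = h 0 j - h 0 0 by rw [add_sub_assoc, ← this]; abel
  induction j with
  | zero => simp
  | succ j ih => rw [← sub_add_sub_cancel (h i (j + 1)) (h i j), ih, hstep, sub_add_sub_cancel]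

def boxMap (c : G) {n : ℕ} (w w' : Fin n → G) (ij : Fin (n + 1) × Fin (n + 1)) : G :=
  c + Fin.partialSum w ij.1 + Fin.partialSum w' ij.2

end Grid

section Embedding

variable {D : ℕ} {f : (Fin 2 → ℤ) → Fin D → ℤ}

lemma IsLip.norm1_sub_eq_one (hl : IsLip 1 f) (hf : Injective f) {x y : Fin 2 → ℤ}
    (hxy : norm1 (x - y) = 1) : norm1 (f x - f y) = 1 := by
  have hne : f x - f y ≠ 0 := sub_ne_zero.2 <| hf.ne fun h => by simp [h, norm1] at hxy
  have hpos : 0 < norm1 (f x - f y) :=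
    (sum_nonneg fun i _ => abs_nonneg _).lt_of_ne (Ne.symm (mt norm1_eq_zero_iff.1 hne))
  have := hl x y hxy
  push_cast at this
  omega

lemma IsLip.sub_succ_eq (hl : IsLip 1 f) (hf : Injective f) (i j : ℤ) :
    f ![i + 1, j + 1] - f ![i + 1, j] = f ![i, j + 1] - f ![i, j] := by
  have unit : ∀ {x y : Fin 2 → ℤ}, norm1 (x - y) = 1 → norm1 (f x - f y) = 1 :=
    hl.norm1_sub_eq_one hf
  have hdiag : f ![i, j + 1] - f ![i, j] + (f ![i + 1, j + 1] - f ![i, j + 1]) ≠ 0 := by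
    rw [sub_add_sub_cancel', sub_ne_zero]
    exact hf.ne (by simp)
  rcases eq_or_eq_of_add_eq_add (u := f ![i + 1, j] - f ![i, j])
      (v := f ![i + 1, j + 1] - f ![i + 1, j]) (unit (by simp [norm1_fin_two]))
      (unit (by simp [norm1_fin_two])) (unit (by simp [norm1_fin_two]))
      (unit (by simp [norm1_fin_two])) (by abel) hdiag with h | h
  · exact absurd (hf (sub_left_inj.1 h)) (by simp)
  · exact h.symm

lemma IsLip.apply_eq_add_sub (hl : IsLip 1 f) (hf : Injective f) (i j : ℕ) :
    f ![i, j] = f ![i, 0] + f ![0, j] - f ![0, 0] :=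
  eq_add_sub_of_sub_succ_eq (h := fun i j : ℕ => f ![i, j])
    (fun i j => by push_cast; exact hl.sub_succ_eq hf i j) i j

lemma IsLip.exists_boxMap_eq (hl : IsLip 1 f) (hf : Injective f) (n : ℕ) :
    ∃ w w' : Fin n → Fin D → ℤ, (∀ k, w k ∈ unitSphere D) ∧ (∀ k, w' k ∈ unitSphere D) ∧
      boxMap (f ![0, 0]) w w' = fun ij => f ![ij.1, ij.2] := by
  have walk (g : Fin (n + 1) → Fin D → ℤ) (i : Fin (n + 1)) :
      g i = g 0 + Fin.partialSum (fun k => g k.succ - g k.castSucc) i := by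
    simpa [neg_add_eq_sub] using (congrFun (Fin.partialSum_left_neg g) i).symm
  refine ⟨fun k => f ![k.succ, 0] - f ![k.castSucc, 0],
    fun k => f ![0, k.succ] - f ![0, k.castSucc],
    fun k => hl.norm1_sub_eq_one hf ?_, fun k => hl.norm1_sub_eq_one hf ?_, ?_⟩
  · simp [norm1_fin_two]
  · simp [norm1_fin_two]
  · funext ij
    have h1 := walk (fun i => f ![i, 0]) ij.1
    have h2 := walk (fun j => f ![0, j]) ij.2
    simp only [Fin.val_zero, Nat.cast_zero] at h1 h2
    rw [boxMap, hl.apply_eq_add_sub hf, h1, h2]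
    abel

end Embedding

section Bernoulli

variable {S : Type*} {p : ℝ} {μ : Measure (S → Bool)}

lemma IsBernoulli.measure_forall_mem_eq_true (hμ : IsBernoulli p μ) (A : Finset S) :
    μ {ω | ∀ s ∈ A, ω s = true} = ENNReal.ofReal p ^ #A := by
  simpa using hμ.2 A fun _ => true

lemma IsBernoulli.measure_exists_injective_eq_true_le (hμ : IsBernoulli p μ) {β : Type*}
    [Fintype β] (M : Finset (β → S)) :
    μ {ω | ∃ g ∈ M, Injective g ∧ ∀ b, ω (g b) = true} ≤
      #M * ENNReal.ofReal p ^ Fintype.card β := by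
  classical
  calc μ {ω | ∃ g ∈ M, Injective g ∧ ∀ b, ω (g b) = true}
      ≤ μ (⋃ g ∈ {g ∈ M | Injective g}, {ω | ∀ s ∈ univ.image g, ω s = true}) := by
        refine measure_mono fun ω ⟨g, hgM, hg, hω⟩ => Set.mem_biUnion (mem_filter.2 ⟨hgM, hg⟩) ?_
        simpa using hω
    _ ≤ ∑ g ∈ {g ∈ M | Injective g}, μ {ω | ∀ s ∈ univ.image g, ω s = true} :=
        measure_biUnion_finset_le _ _
    _ = ∑ _g ∈ {g ∈ M | Injective g}, ENNReal.ofReal p ^ Fintype.card β := by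
        refine sum_congr rfl fun g hg => ?_
        rw [hμ.measure_forall_mem_eq_true, card_image_of_injective _ (mem_filter.1 hg).2,
          card_univ]
    _ ≤ #M * ENNReal.ofReal p ^ Fintype.card β := by
        rw [sum_const, nsmul_eq_mul]
        gcongr
        exact filter_subset _ _

end Bernoulli

lemma ENNReal.tendsto_pow_mul_pow_sq_atTop_nhds_zero {K q : ℝ≥0∞} (hK : K ≠ ⊤) (hq : q < 1) :
    Tendsto (fun n : ℕ => K ^ n * q ^ (n ^ 2)) atTop (𝓝 0) := by
  have hKq : Tendsto (fun n : ℕ => K * q ^ n) atTop (𝓝 0) := by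
    simpa using ENNReal.Tendsto.const_mul (ENNReal.tendsto_pow_atTop_nhds_zero_of_lt_one hq)
      (Or.inr hK)
  have hsmall : ∀ᶠ n : ℕ in atTop, K ^ n * q ^ (n ^ 2) ≤ 2⁻¹ ^ n := by
    filter_upwards [hKq.eventually (eventually_le_nhds (by norm_num : (0 : ℝ≥0∞) < 2⁻¹))]
      with n hn
    rw [sq, pow_mul, ← mul_pow]
    exact pow_le_pow_left' hn n
  exact tendsto_of_tendsto_of_tendsto_of_le_of_le' tendsto_const_nhds
    (ENNReal.tendsto_pow_atTop_nhds_zero_of_lt_one (by norm_num)) (Eventually.of_forall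
      fun _ => bot_le) hsmall

section Percolation

variable {D : ℕ} {p : ℝ} {μ : Measure ((Fin D → ℤ) → Bool)}

lemma IsBernoulli.measure_exists_injective_isLip_eq_le (hμ : IsBernoulli p μ) (c : Fin D → ℤ)
    (n : ℕ) :
    μ {ω | ∃ f : (Fin 2 → ℤ) → Fin D → ℤ,
        Injective f ∧ IsLip 1 f ∧ (∀ x, ω (f x) = true) ∧ f ![0, 0] = c} ≤
      (#(finite_unitSphere (D := D)).toFinset ^ 2) ^ n * ENNReal.ofReal p ^ ((n + 1) ^ 2) := by
  classical
  set W := Fintype.piFinset fun _ : Fin n => (finite_unitSphere (D := D)).toFinset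
  set M := (W ×ˢ W).image fun ww => boxMap c ww.1 ww.2
  calc μ _ ≤ μ {ω | ∃ g ∈ M, Injective g ∧ ∀ b, ω (g b) = true} := by
        refine measure_mono fun ω ⟨f, hf, hl, hω, hc⟩ => ?_
        obtain ⟨w, w', hw, hw', hbox⟩ := hl.exists_boxMap_eq hf n
        refine ⟨boxMap c w w', mem_image.2 ⟨(w, w'), ?_, rfl⟩, ?_, ?_⟩
        · simp [W, hw, hw']
        · rw [← hc, hbox]
          exact hf.comp fun ij kl h => by simpa [Prod.ext_iff, Fin.ext_iff] using h
        · simp [← hc, hbox, hω]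
    _ ≤ #M * ENNReal.ofReal p ^ ((n + 1) ^ 2) := by
        simpa [sq] using hμ.measure_exists_injective_eq_true_le M
    _ ≤ _ := by
        gcongr
        exact_mod_cast card_image_le.trans_eq (by simp [W]; ring)

lemma IsBernoulli.measure_exists_injective_isLip_eq_eq_zero (hμ : IsBernoulli p μ) (hp : p < 1)
    (c : Fin D → ℤ) :
    μ {ω | ∃ f : (Fin 2 → ℤ) → Fin D → ℤ,
        Injective f ∧ IsLip 1 f ∧ (∀ x, ω (f x) = true) ∧ f ![0, 0] = c} = 0 := by
  refine le_antisymm (ge_of_tendsto' (ENNReal.tendsto_pow_mul_pow_sq_atTop_nhds_zero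
    (K := (#(finite_unitSphere (D := D)).toFinset ^ 2 : ℕ)) (by simp)
    (ENNReal.ofReal_lt_one.2 hp)) fun n => ?_) bot_le
  refine (hμ.measure_exists_injective_isLip_eq_le c n).trans ?_
  push_cast
  exact mul_le_mul_right (pow_le_pow_of_le_one bot_le (ENNReal.ofReal_le_one.2 hp.le)
    (Nat.pow_le_pow_left n.le_succ 2)) _

end Percolation

theorem no_one_lipschitz_injection_general (D : ℕ) (p : ℝ) (hp : p < 1)
    (μ : Measure ((Fin D → ℤ) → Bool)) (hμ : IsBernoulli p μ) :
    ∀ᵐ ω ∂μ, ¬ ∃ f : (Fin 2 → ℤ) → (Fin D → ℤ),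
      Function.Injective f ∧ IsLip 1 f ∧ ∀ x, ω (f x) = true := by
  rw [ae_iff]
  simp only [not_not]
  refine measure_mono_null ?_
    (measure_iUnion_null fun c => hμ.measure_exists_injective_isLip_eq_eq_zero hp c)
  rintro ω ⟨f, hf, hl, hω⟩
  exact Set.mem_iUnion.2 ⟨f ![0, 0], f, hf, hl, hω, rfl⟩

/-- For every `D ≥ 2` and every `p < 1`, `P_p`-a.s. there is no 1-Lipschitz
injection from `ℤ^2` into the open sites of `ℤ^D`. -/
theorem no_one_lipschitz_injection (D : ℕ) (hD : 2 ≤ D) (p : ℝ) (hp : p < 1)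
    (μ : Measure ((Fin D → ℤ) → Bool)) (hμ : IsBernoulli p μ) :
    ∀ᵐ ω ∂μ, ¬ ∃ f : (Fin 2 → ℤ) → (Fin D → ℤ),
      Function.Injective f ∧ IsLip 1 f ∧ ∀ x, ω (f x) = true :=
  no_one_lipschitz_injection_general D p hp μ hμ
end

section
/- (Lipschitz percolation.) Let d ≥ 2 and p > 1 − (2d)^{−2}. Then P_p-almost surely there exists a function F : Z^{d−1} → Z_+ (the positive integers) such that |F(x) − F(y)| ≤ 1 whenever ‖x − y‖₁ = 1, and for every x ∈ Z^{d−1} the site (x, F(x)) ∈ Z^d is open. -/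
/-!
Call `(x, k)` reachable if it can be reached from the half-space `{k ≤ 0}` by steps that go up
into a closed site or diagonally down into a neighbouring column. On the event that every column
contains only finitely many reachable sites, `F x = 1 + max {k | (x, k) reachable}` works: a
diagonal step from the top of one column bounds the top of its neighbours, and the site just
above the top of a column is open, or it would be reachable.

Reading a reachable site backwards, it is the start of a path to `{k ≤ 0}` in which each
downward step leaves a closed site; shortcutting loops makes these sites distinct. A path of
length `n` from height `k` needs at least `(n + k) / 2` downward steps, so it exists with
probability at most `(1 - p) ^ ((n + k) / 2) ≤ ρ ^ (n + k)` with `ρ = (2d)⁻¹`. There are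
`(2d - 1) ^ n` such paths, so the probability that `(x, k)` is reachable decays geometrically
in `k`, and Borel–Cantelli bounds every column almost surely.
-/

open MeasureTheory

open Filter
open scoped ENNReal

theorem norm1_sub_comm {n : ℕ} (x y : Fin n → ℤ) : norm1 (x - y) = norm1 (y - x) := by
  unfold norm1
  congr 1 with i
  exact abs_sub_comm (x i) (y i)

theorem exists_eq_single_of_norm1_eq_one {n : ℕ} {v : Fin n → ℤ} (hv : norm1 v = 1) :
    ∃ (j : Fin n) (s : ℤˣ), v = Pi.single j (s : ℤ) := by
  rw [norm1] at hv
  obtain ⟨j, hj⟩ : ∃ j, v j ≠ 0 := by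
    by_contra! h
    simp [h] at hv
  have hsplit := Finset.add_sum_erase Finset.univ (fun i => |v i|) (Finset.mem_univ j)
  have hnonneg : ∀ i ∈ Finset.univ.erase j, 0 ≤ |v i| := fun i _ => abs_nonneg (v i)
  have hj₁ := Int.one_le_abs hj
  have hrest : ∑ i ∈ Finset.univ.erase j, |v i| = 0 := by
    have := Finset.sum_nonneg hnonneg
    omega
  obtain ⟨s, hs⟩ : IsUnit (v j) := Int.isUnit_iff_abs_eq.2 (by omega)
  refine ⟨j, s, funext fun i => ?_⟩
  rcases eq_or_ne i j with rfl | hij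
  · simp [hs]
  · rw [Pi.single_eq_of_ne hij]
    exact abs_eq_zero.1 ((Finset.sum_eq_zero_iff_of_nonneg hnonneg).1 hrest i (by simp [hij]))

theorem IsBernoulli.measure_forall_eq_false {S : Type*} {p : ℝ} {μ : Measure (S → Bool)}
    (hμ : IsBernoulli p μ) (A : Finset S) :
    μ {ω | ∀ s ∈ A, ω s = false} = ENNReal.ofReal (1 - p) ^ A.card := by
  simpa using hμ.2 A fun _ => false

theorem ENNReal.tsum_pow_length (α : Type*) [Fintype α] (c : ℝ≥0∞) :
    ∑' l : List α, c ^ l.length = ∑' n : ℕ, (Fintype.card α * c) ^ n := by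
  rw [← (List.equivSigmaTuple (α := α)).symm.tsum_eq, ENNReal.tsum_sigma']
  refine tsum_congr fun n => ?_
  simp [List.equivSigmaTuple, mul_pow]

namespace LipschitzPercolation

variable {e : ℕ}

abbrev Point (e : ℕ) := (Fin e → ℤ) × ℤ

def site (u : Point e) : Fin (e + 1) → ℤ := Fin.snoc u.1 u.2

theorem site_injective : Function.Injective (site (e := e)) := fun _ _ h =>
  Prod.ext (Fin.snoc_injective2 h).1 (Fin.snoc_injective2 h).2

/-- The sites reachable from `{k ≤ 0}` by the admissible paths of the paper: steps up into a
closed site, or diagonally down into a neighbouring column. -/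
inductive Reachable (ω : (Fin (e + 1) → ℤ) → Bool) : (Fin e → ℤ) → ℤ → Prop
  | of_nonpos {x : Fin e → ℤ} {k : ℤ} : k ≤ 0 → Reachable ω x k
  | up {x : Fin e → ℤ} {k : ℤ} : Reachable ω x k → ω (Fin.snoc x (k + 1)) = false →
      Reachable ω x (k + 1)
  | diag {x y : Fin e → ℤ} {k : ℤ} : Reachable ω y k → norm1 (x - y) = 1 →
      Reachable ω x (k - 1)

theorem exists_open_surface_of_bddAbove {ω : (Fin (e + 1) → ℤ) → Bool}
    (hω : ∀ x, BddAbove {k | Reachable ω x k}) :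
    ∃ F : (Fin e → ℤ) → ℤ, (∀ x, 0 < F x) ∧
      (∀ x y, norm1 (x - y) = 1 → |F x - F y| ≤ 1) ∧ ∀ x, ω (Fin.snoc x (F x)) = true := by
  set M := fun x => sSup {k | Reachable ω x k}
  have hM : ∀ x, Reachable ω x (M x) := fun x => Int.csSup_mem ⟨0, .of_nonpos le_rfl⟩ (hω x)
  have hle : ∀ x k, Reachable ω x k → k ≤ M x := fun x _ hk => le_csSup (hω x) hk
  refine ⟨fun x => M x + 1, fun x => ?_, fun x y hxy => ?_, fun x => ?_⟩
  · have := hle x 0 (.of_nonpos le_rfl)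
    dsimp only
    omega
  · dsimp only
    have h₁ := hle x _ ((hM y).diag hxy)
    have h₂ := hle y _ ((hM x).diag (by rwa [norm1_sub_comm]))
    rw [abs_le]
    constructor <;> omega
  · by_contra hopen
    dsimp only at hopen ⊢
    have := hle x _ ((hM x).up (Bool.eq_false_iff.2 hopen))
    omega

/-- A step of a reachability path read backwards: `none` goes down one level, leaving a site
that must be closed; `some (j, s)` goes up one level into the column shifted by `s` along `j`. -/
abbrev Step (e : ℕ) := Option (Fin e × ℤˣ)

theorem card_step : Fintype.card (Step e) = 2 * e + 1 := by
  simp only [Fintype.card_option, Fintype.card_prod, Fintype.card_fin, Fintype.card_units_int]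
  ring

def Step.move : Step e → Point e → Point e
  | none, u => (u.1, u.2 - 1)
  | some (j, s), u => (u.1 + Pi.single j (s : ℤ), u.2 + 1)

def endpoint (u : Point e) (σ : List (Step e)) : Point e := σ.foldl (fun v a => a.move v) u

def positions (u : Point e) (σ : List (Step e)) : List (Point e) :=
  σ.scanl (fun v a => a.move v) u

def closedSites : Point e → List (Step e) → List (Point e)
  | _, [] => []
  | u, none :: σ => u :: closedSites (Step.move none u) σ
  | u, some a :: σ => closedSites (Step.move (some a) u) σ

def IsAdmissible (ω : (Fin (e + 1) → ℤ) → Bool) (u : Point e) (σ : List (Step e)) : Prop :=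
  (∀ v ∈ closedSites u σ, ω (site v) = false) ∧ (endpoint u σ).2 ≤ 0

theorem endpoint_append (u : Point e) (σ τ : List (Step e)) :
    endpoint u (σ ++ τ) = endpoint (endpoint u σ) τ :=
  List.foldl_append

theorem closedSites_append (u : Point e) (σ τ : List (Step e)) :
    closedSites u (σ ++ τ) = closedSites u σ ++ closedSites (endpoint u σ) τ := by
  induction σ generalizing u with
  | nil => rfl
  | cons a σ ih => cases a <;> simp [closedSites, endpoint, ih]

theorem closedSites_prefix (u : Point e) {σ τ : List (Step e)} (h : σ <+: τ) :
    closedSites u σ <+: closedSites u τ := by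
  obtain ⟨t, rfl⟩ := h
  rw [closedSites_append]
  exact List.prefix_append _ _

theorem closedSites_sublist_positions (u : Point e) (σ : List (Step e)) :
    (closedSites u σ).Sublist (positions u σ) := by
  induction σ generalizing u with
  | nil => exact List.nil_sublist _
  | cons a σ ih =>
    rw [positions, List.scanl_cons]
    cases a
    · exact (ih _).cons_cons u
    · exact (ih _).cons u

theorem endpoint_snd_add_two_mul_length_closedSites (u : Point e) (σ : List (Step e)) :
    (endpoint u σ).2 + 2 * (closedSites u σ).length = u.2 + σ.length := by
  induction σ generalizing u with
  | nil => simp [endpoint, closedSites]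
  | cons a σ ih =>
    have := ih (a.move u)
    cases a <;> simp only [endpoint, closedSites, Step.move, List.foldl_cons,
      List.length_cons] at this ⊢ <;> push_cast at this ⊢ <;> omega

theorem exists_shortcut_of_not_nodup {u : Point e} {σ : List (Step e)}
    (h : ¬ (positions u σ).Nodup) :
    ∃ τ : List (Step e), τ.length < σ.length ∧ endpoint u τ = endpoint u σ ∧
      (closedSites u τ).Sublist (closedSites u σ) := by
  obtain ⟨i, j, hij, hj, heq⟩ : ∃ i j, i < j ∧ j ≤ σ.length ∧
      endpoint u (σ.take i) = endpoint u (σ.take j) := by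
    rw [List.nodup_iff_getElem?_ne_getElem?] at h
    push Not at h
    obtain ⟨i, j, hij, hj, heq⟩ := h
    simp only [positions, List.length_scanl] at hj
    simp only [positions, List.getElem?_scanl, if_pos (show i ≤ σ.length by omega),
      if_pos (show j ≤ σ.length by omega), Option.some.injEq] at heq
    exact ⟨i, j, hij, by omega, heq⟩
  refine ⟨σ.take i ++ σ.drop j, ?_, ?_, ?_⟩
  · simp only [List.length_append, List.length_take, List.length_drop]
    omega
  · rw [endpoint_append, heq, ← endpoint_append, List.take_append_drop]
  · conv_rhs => rw [← List.take_append_drop j σ]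
    rw [closedSites_append, closedSites_append, heq]
    exact (closedSites_prefix u (List.take_prefix_take_left hij.le)).sublist.append_right _

theorem IsAdmissible.exists_nodup {ω : (Fin (e + 1) → ℤ) → Bool} {u : Point e}
    {σ : List (Step e)} (h : IsAdmissible ω u σ) :
    ∃ τ, IsAdmissible ω u τ ∧ (positions u τ).Nodup := by
  induction hn : σ.length using Nat.strong_induction_on generalizing σ with
  | _ n ih =>
    by_cases hnd : (positions u σ).Nodup
    · exact ⟨σ, h, hnd⟩
    obtain ⟨τ, hlt, hend, hsub⟩ := exists_shortcut_of_not_nodup hnd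
    exact ih _ (hn ▸ hlt) ⟨fun v hv => h.1 v (hsub.subset hv), hend ▸ h.2⟩ rfl

theorem Reachable.exists_isAdmissible {ω : (Fin (e + 1) → ℤ) → Bool} {x : Fin e → ℤ} {k : ℤ}
    (h : Reachable ω x k) : ∃ σ, IsAdmissible ω (x, k) σ := by
  induction h with
  | of_nonpos hk => exact ⟨[], by simp [closedSites], hk⟩
  | @up x k _ hclosed ih =>
    obtain ⟨σ, hσ, hend⟩ := ih
    have hmove : Step.move none (x, k + 1) = (x, k) := by simp [Step.move]
    refine ⟨none :: σ, ?_, ?_⟩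
    · simp only [closedSites, hmove, List.mem_cons, forall_eq_or_imp]
      exact ⟨hclosed, hσ⟩
    · simpa [endpoint, hmove] using hend
  | @diag x y k _ hxy ih =>
    obtain ⟨σ, hσ, hend⟩ := ih
    obtain ⟨j, s, hjs⟩ := exists_eq_single_of_norm1_eq_one (by rwa [norm1_sub_comm] at hxy)
    have hmove : Step.move (some (j, s)) (x, k - 1) = (y, k) := by
      simp [Step.move, ← hjs]
    exact ⟨some (j, s) :: σ, by simpa [closedSites, hmove] using hσ,
      by simpa [endpoint, hmove] using hend⟩

theorem Reachable.exists_isAdmissible_nodup {ω : (Fin (e + 1) → ℤ) → Bool} {x : Fin e → ℤ}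
    {k : ℤ} (h : Reachable ω x k) :
    ∃ σ, IsAdmissible ω (x, k) σ ∧ (closedSites (x, k) σ).Nodup := by
  obtain ⟨σ, hσ⟩ := h.exists_isAdmissible
  obtain ⟨τ, hτ, hnd⟩ := hσ.exists_nodup
  exact ⟨τ, hτ, (closedSites_sublist_positions _ τ).nodup hnd⟩

section Peierls

variable {p : ℝ} {μ : Measure ((Fin (e + 1) → ℤ) → Bool)} {ρ : ℝ≥0∞}

theorem measure_isAdmissible_le (hμ : IsBernoulli p μ) (hρp : ENNReal.ofReal (1 - p) ≤ ρ ^ 2)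
    (hρ : ρ ≤ 1) {x : Fin e → ℤ} {k : ℕ} {σ : List (Step e)}
    (hσ : (closedSites (x, (k : ℤ)) σ).Nodup) :
    μ {ω | IsAdmissible ω (x, k) σ} ≤ ρ ^ (σ.length + k) := by
  by_cases hend : (endpoint (x, (k : ℤ)) σ).2 ≤ 0
  swap
  · simp [IsAdmissible, hend]
  set A := ((closedSites (x, (k : ℤ)) σ).map site).toFinset
  have hA : A.card = (closedSites (x, (k : ℤ)) σ).length := by
    rw [List.toFinset_card_of_nodup (hσ.map site_injective), List.length_map]
  have hlen : σ.length + k ≤ 2 * A.card := by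
    have := endpoint_snd_add_two_mul_length_closedSites (x, (k : ℤ)) σ
    simp only at this
    omega
  calc μ {ω | IsAdmissible ω (x, k) σ}
      ≤ μ {ω | ∀ s ∈ A, ω s = false} := measure_mono fun ω hω s hs => by
        obtain ⟨v, hv, rfl⟩ := List.mem_map.1 (List.mem_toFinset.1 hs)
        exact hω.1 v hv
    _ = ENNReal.ofReal (1 - p) ^ A.card := hμ.measure_forall_eq_false A
    _ ≤ (ρ ^ 2) ^ A.card := by gcongr
    _ ≤ ρ ^ (σ.length + k) := by
      rw [← pow_mul]
      exact pow_le_pow_of_le_one zero_le hρ hlen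

theorem measure_reachable_le (hμ : IsBernoulli p μ) (hρp : ENNReal.ofReal (1 - p) ≤ ρ ^ 2)
    (hρ : ρ ≤ 1) (x : Fin e → ℤ) (k : ℕ) :
    μ {ω | Reachable ω x k} ≤ ρ ^ k * ∑' n : ℕ, ((2 * e + 1) * ρ) ^ n := by
  let Paths := {σ : List (Step e) // (closedSites (x, (k : ℤ)) σ).Nodup}
  calc μ {ω | Reachable ω x k}
      ≤ μ (⋃ σ : Paths, {ω | IsAdmissible ω (x, k) σ}) := measure_mono fun ω hω => by
        obtain ⟨σ, hσ, hnd⟩ := hω.exists_isAdmissible_nodup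
        exact Set.mem_iUnion.2 ⟨⟨σ, hnd⟩, hσ⟩
    _ ≤ ∑' σ : Paths, μ {ω | IsAdmissible ω (x, k) σ} := measure_iUnion_le _
    _ ≤ ∑' σ : Paths, ρ ^ (σ.1.length + k) :=
        ENNReal.tsum_le_tsum fun σ => measure_isAdmissible_le hμ hρp hρ σ.2
    _ ≤ ∑' σ : List (Step e), ρ ^ (σ.length + k) :=
        ENNReal.tsum_comp_le_tsum_of_injective Subtype.val_injective _
    _ = ρ ^ k * ∑' σ : List (Step e), ρ ^ σ.length := by
        rw [← ENNReal.tsum_mul_left]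
        simp_rw [pow_add, mul_comm]
    _ = ρ ^ k * ∑' n : ℕ, ((2 * e + 1) * ρ) ^ n := by
        rw [ENNReal.tsum_pow_length, card_step]
        push_cast
        rfl

theorem ae_bddAbove_reachable (hμ : IsBernoulli p μ) (hρp : ENNReal.ofReal (1 - p) ≤ ρ ^ 2)
    (hρ : (2 * e + 1) * ρ < 1) (x : Fin e → ℤ) :
    ∀ᵐ ω ∂μ, BddAbove {k | Reachable ω x k} := by
  have hρ1 : ρ < 1 := (le_mul_of_one_le_left' (by simp)).trans_lt hρ
  have hsum : ∑' k : ℕ, μ {ω | Reachable ω x k} ≠ ∞ := by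
    refine ne_top_of_le_ne_top ?_
      (ENNReal.tsum_le_tsum fun k => measure_reachable_le hμ hρp hρ1.le x k)
    rw [ENNReal.tsum_mul_right]
    exact ENNReal.mul_ne_top (tsum_geometric_lt_top.2 hρ1).ne (tsum_geometric_lt_top.2 hρ).ne
  filter_upwards [ae_eventually_notMem hsum] with ω hω
  obtain ⟨N, hN⟩ := eventually_atTop.1 hω
  refine ⟨N, fun k hk => ?_⟩
  by_contra! hNk
  lift k to ℕ using by omega
  exact hN k (by omega) hk

end Peierls

end LipschitzPercolation

open LipschitzPercolation in
theorem lipschitz_percolation_general (e : ℕ) (p : ℝ)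
    (hp : 1 - ((2 * (e + 1) : ℝ))⁻¹ ^ 2 < p)
    (μ : Measure ((Fin (e + 1) → ℤ) → Bool)) (hμ : IsBernoulli p μ) :
    ∀ᵐ ω ∂μ, ∃ F : (Fin e → ℤ) → ℤ,
      (∀ x, 0 < F x) ∧
      (∀ x y, norm1 (x - y) = 1 → |F x - F y| ≤ 1) ∧
      ∀ x, ω (Fin.snoc x (F x)) = true := by
  set r : ℝ := (2 * (e + 1))⁻¹
  have hρp : ENNReal.ofReal (1 - p) ≤ ENNReal.ofReal r ^ 2 := by
    rw [← ENNReal.ofReal_pow (by positivity)]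
    exact ENNReal.ofReal_le_ofReal (by linarith)
  have hρ : (2 * e + 1) * ENNReal.ofReal r < 1 := by
    rw [show (2 * e + 1 : ℝ≥0∞) = ENNReal.ofReal (2 * e + 1) from
      mod_cast (ENNReal.ofReal_natCast (2 * e + 1)).symm,
      ← ENNReal.ofReal_mul (by positivity), ENNReal.ofReal_lt_one]
    rw [← div_eq_mul_inv, div_lt_one (by positivity)]
    linarith
  filter_upwards [ae_all_iff.2 (ae_bddAbove_reachable hμ hρp hρ)] with ω hω
  exact exists_open_surface_of_bddAbove hω

/-- Lipschitz percolation: with `d = e + 1 ≥ 2` and `p > 1 - (2d)⁻²`, `P_p`-a.s.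
there is a 1-Lipschitz function `F : ℤ^(d-1) → ℤ_+` such that every site
`(x, F x)` of `ℤ^d` is open. -/
theorem lipschitz_percolation (e : ℕ) (he : 1 ≤ e) (p : ℝ)
    (hp : 1 - ((2 * (e + 1) : ℝ))⁻¹ ^ 2 < p)
    (μ : Measure ((Fin (e + 1) → ℤ) → Bool)) (hμ : IsBernoulli p μ) :
    ∀ᵐ ω ∂μ, ∃ F : (Fin e → ℤ) → ℤ,
      (∀ x, 0 < F x) ∧
      (∀ x y, norm1 (x - y) = 1 → |F x - F y| ≤ 1) ∧
      ∀ x, ω (Fin.snoc x (F x)) = true :=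
  lipschitz_percolation_general e p hp μ hμ
end

section
/- For all integers d, D, M ≥ 1 there exists p > 0 such that P_p-almost surely there exists no M-Lipschitz injection from Z^d into the set W_p(Z^D) of open sites of site percolation on Z^D. (Equivalently, p_c(d, D, M) > 0 for all d, D, M ≥ 1.) -/
/-!
The restriction of an injective `M`-Lipschitz map `f : ℤ^d → ℤ^D` to a coordinate ray of `ℤ^d`
is a self-avoiding path of open sites whose steps lie in the box `S = [-M, M]^D`. From a fixed
site there are at most `#S ^ n` such paths of `n` steps, each open with probability `p ^ (n + 1)`,
so for `#S * p < 1` almost surely no infinite one starts there; a countable union over the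
starting sites finishes the proof.
-/

open MeasureTheory

open Finset Function

section Percolation

variable {V : Type*} {p : ℝ} {μ : Measure (V → Bool)}

theorem IsBernoulli.measure_forall_open {ι : Type*} [Fintype ι] (hμ : IsBernoulli p μ)
    {w : ι → V} (hw : Injective w) :
    μ {ω | ∀ i, ω (w i) = true} = ENNReal.ofReal p ^ Fintype.card ι := by
  classical
  simpa using hμ.2 (univ.map ⟨w, hw⟩) fun _ => true

theorem IsBernoulli.measure_injective_and_forall_open_le {ι : Type*} [Fintype ι]
    (hμ : IsBernoulli p μ) (w : ι → V) :
    μ {ω | Injective w ∧ ∀ i, ω (w i) = true} ≤ ENNReal.ofReal p ^ Fintype.card ι := by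
  by_cases hw : Injective w
  · simp only [hw, true_and, hμ.measure_forall_open hw, le_refl]
  · simp [hw]

end Percolation

section SelfAvoidingPaths

variable {G : Type*} [AddGroup G] {p : ℝ} {μ : Measure (G → Bool)}

def openPathEvent (S : Finset G) (v : G) (n : ℕ) : Set (G → Bool) :=
  {ω | ∃ w : Fin (n + 1) → G, w 0 = v ∧ Injective w ∧
    (∀ i : Fin n, -w i.castSucc + w i.succ ∈ S) ∧ ∀ j, ω (w j) = true}

theorem openPathEvent_subset_iUnion (S : Finset G) (v : G) (n : ℕ) :
    openPathEvent S v n ⊆ ⋃ σ : Fin n → S,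
      {ω | Injective (v +ᵥ Fin.partialSum (σ · : Fin n → G)) ∧
        ∀ j, ω ((v +ᵥ Fin.partialSum (σ · : Fin n → G)) j) = true} := by
  rintro ω ⟨w, rfl, hw_inj, hw_step, hw_open⟩
  refine Set.mem_iUnion.2 ⟨fun i => ⟨_, hw_step i⟩, ?_⟩
  simp only [Fin.partialSum_left_neg w]
  exact ⟨hw_inj, hw_open⟩

theorem measure_openPathEvent_le (hμ : IsBernoulli p μ) (S : Finset G) (v : G) (n : ℕ) :
    μ (openPathEvent S v n) ≤ #S ^ n * ENNReal.ofReal p ^ (n + 1) := by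
  refine (measure_mono (openPathEvent_subset_iUnion S v n)).trans
    ((measure_iUnion_fintype_le _ _).trans ?_)
  refine (sum_le_sum fun _ _ => hμ.measure_injective_and_forall_open_le _).trans_eq ?_
  simp

theorem measure_iInter_openPathEvent_eq_zero (hμ : IsBernoulli p μ) {S : Finset G}
    (hS : (#S : ℝ) * p < 1) (v : G) : μ (⋂ n, openPathEvent S v n) = 0 := by
  have h_lt : (#S : ENNReal) * ENNReal.ofReal p < 1 := by
    rw [← ENNReal.ofReal_natCast, ← ENNReal.ofReal_mul (Nat.cast_nonneg _)]
    exact ENNReal.ofReal_lt_one.2 hS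
  have h_tendsto : Filter.Tendsto (fun n => ENNReal.ofReal p * (#S * ENNReal.ofReal p) ^ n)
      Filter.atTop (nhds 0) := by
    simpa using ENNReal.Tendsto.const_mul (ENNReal.tendsto_pow_atTop_nhds_zero_of_lt_one h_lt)
      (Or.inr ENNReal.ofReal_ne_top)
  refine le_antisymm (ge_of_tendsto' h_tendsto fun n => ?_) zero_le
  calc μ (⋂ n, openPathEvent S v n)
      ≤ μ (openPathEvent S v n) := measure_mono (Set.iInter_subset _ n)
    _ ≤ #S ^ n * ENNReal.ofReal p ^ (n + 1) := measure_openPathEvent_le hμ S v n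
    _ = ENNReal.ofReal p * (#S * ENNReal.ofReal p) ^ n := by ring

theorem ae_not_exists_injective_open_path [Countable G] (hμ : IsBernoulli p μ) {S : Finset G}
    (hS : (#S : ℝ) * p < 1) :
    ∀ᵐ ω ∂μ, ¬ ∃ w : ℕ → G, Injective w ∧ (∀ k, -w k + w (k + 1) ∈ S) ∧
      ∀ k, ω (w k) = true := by
  have h_null : ∀ᵐ ω ∂μ, ∀ v, ω ∉ ⋂ n, openPathEvent S v n :=
    ae_all_iff.2 fun v =>
      measure_eq_zero_iff_ae_notMem.1 (measure_iInter_openPathEvent_eq_zero hμ hS v)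
  filter_upwards [h_null] with ω hω
  rintro ⟨w, hw_inj, hw_step, hw_open⟩
  exact hω (w 0) <| Set.mem_iInter.2 fun n =>
    ⟨fun j => w j, rfl, hw_inj.comp Fin.val_injective, fun i => hw_step i, fun j => hw_open j⟩

end SelfAvoidingPaths

theorem mem_Icc_of_norm1_le {D M : ℕ} {z : Fin D → ℤ} (h : norm1 z ≤ M) :
    z ∈ Icc (-M : Fin D → ℤ) M := by
  have h_abs : ∀ i, |z i| ≤ M := fun i =>
    (single_le_sum (f := fun j => |z j|) (fun j _ => abs_nonneg (z j)) (mem_univ i)).trans h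
  simpa [Pi.le_def, ← forall_and, abs_le] using h_abs

theorem norm1_single_one {d : ℕ} (i : Fin d) : norm1 (Pi.single i (1 : ℤ)) = 1 := by
  simp [norm1, Pi.single_apply, apply_ite]

theorem IsLip.neg_add_mem_Icc {d D M : ℕ} {f : (Fin d → ℤ) → (Fin D → ℤ)} (hf : IsLip M f)
    (i : Fin d) (k : ℕ) :
    -f (Pi.single i (k : ℤ)) + f (Pi.single i ((k + 1 : ℕ) : ℤ)) ∈ Icc (-M : Fin D → ℤ) M := by
  refine mem_Icc_of_norm1_le ?_
  rw [neg_add_eq_sub]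
  refine hf _ _ ?_
  rw [← Pi.single_sub]
  simpa using norm1_single_one i

theorem critical_probability_positive_general (d D M : ℕ) (hd : 1 ≤ d) :
    ∃ p : ℝ, 0 < p ∧
      ∀ μ : Measure ((Fin D → ℤ) → Bool), IsBernoulli p μ →
        ∀ᵐ ω ∂μ, ¬ ∃ f : (Fin d → ℤ) → (Fin D → ℤ),
          Function.Injective f ∧ IsLip M f ∧ ∀ x, ω (f x) = true := by
  set S := Icc (-M : Fin D → ℤ) M
  have hS : (0 : ℝ) < #S := by
    exact_mod_cast card_pos.2 ⟨0, mem_Icc_of_norm1_le (by simp [norm1])⟩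
  refine ⟨1 / (2 * #S), by positivity, fun μ hμ => ?_⟩
  have h_subcritical : (#S : ℝ) * (1 / (2 * #S)) < 1 := by
    field_simp
    norm_num
  filter_upwards [ae_not_exists_injective_open_path hμ h_subcritical] with ω hω
  rintro ⟨f, hf_inj, hf_lip, hf_open⟩
  let i₀ : Fin d := ⟨0, hd⟩
  exact hω ⟨fun k => f (Pi.single i₀ k),
    hf_inj.comp ((Pi.single_injective i₀).comp Nat.cast_injective),
    hf_lip.neg_add_mem_Icc i₀, fun k => hf_open _⟩

/-- For all `d, D, M ≥ 1` there exists `p > 0` such that `P_p`-a.s. there is no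
`M`-Lipschitz injection from `ℤ^d` into the open sites of `ℤ^D`. -/
theorem critical_probability_positive (d D M : ℕ) (hd : 1 ≤ d) (hD : 1 ≤ D) (hM : 1 ≤ M) :
    ∃ p : ℝ, 0 < p ∧
      ∀ μ : Measure ((Fin D → ℤ) → Bool), IsBernoulli p μ →
        ∀ᵐ ω ∂μ, ¬ ∃ f : (Fin d → ℤ) → (Fin D → ℤ),
          Function.Injective f ∧ IsLip M f ∧ ∀ x, ω (f x) = true :=
  critical_probability_positive_general d D M hd
end

section
/- Let x₁, …, x_k ∈ Z^D be distinct sites, and let A be the event that there exists a singly-infinite self-avoiding path 0 = y₀, y₁, y₂, … in Z^D (a sequence of distinct sites with consecutive sites at ℓ¹-distance 1) such that the sites x_i + y_j, for i = 1, …, k and j = 0, 1, 2, …, are pairwise distinct and all open. If p < (2D)^{−1/k}, then P_p(A) = 0. -/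
open MeasureTheory

/-!
Fix `n`. An admissible path is determined on `0, …, n` by its first `n` steps, each one of
the `2D` unit vectors, and it then forces the `k (n + 1)` distinct sites `x i + y j`, `j ≤ n`,
to be open. A union bound over step sequences gives `P_p(A) ≤ (2D)^n p^{k (n + 1)}`, which
tends to `0` as `n → ∞` precisely because `2D p^k < 1`.
-/

open ENNReal Filter Topology

namespace IsBernoulli

variable {S : Type*} {p : ℝ} {μ : Measure (S → Bool)}

theorem measure_forall_eq_true {ι : Type*} [Fintype ι] (hμ : IsBernoulli p μ) {f : ι → S}
    (hf : Function.Injective f) :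
    μ {ω | ∀ i, ω (f i) = true} = ENNReal.ofReal p ^ Fintype.card ι := by
  classical
  simpa [Finset.card_image_of_injective _ hf] using hμ.2 (Finset.univ.image f) fun _ => true

theorem measure_le_card_mul_pow {σ ι : Type*} [Fintype σ] [Fintype ι] (hμ : IsBernoulli p μ)
    (f : σ → ι → S) {E : Set (S → Bool)}
    (hE : ∀ ω ∈ E, ∃ s, Function.Injective (f s) ∧ ∀ i, ω (f s i) = true) :
    μ E ≤ Fintype.card σ * ENNReal.ofReal p ^ Fintype.card ι := by
  have hcover : E ⊆ ⋃ s, {ω | Function.Injective (f s) ∧ ∀ i, ω (f s i) = true} :=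
    fun ω hω => Set.mem_iUnion.2 (hE ω hω)
  have hterm (s : σ) :
      μ {ω | Function.Injective (f s) ∧ ∀ i, ω (f s i) = true} ≤
        ENNReal.ofReal p ^ Fintype.card ι := by
    by_cases hs : Function.Injective (f s)
    · simpa [hs] using (hμ.measure_forall_eq_true hs).le
    · simp [hs]
  calc μ E ≤ ∑ s, μ {ω | Function.Injective (f s) ∧ ∀ i, ω (f s i) = true} :=
        (measure_mono hcover).trans (measure_iUnion_fintype_le _ _)
    _ ≤ ∑ _s : σ, ENNReal.ofReal p ^ Fintype.card ι := Finset.sum_le_sum fun s _ => hterm s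
    _ = Fintype.card σ * ENNReal.ofReal p ^ Fintype.card ι := by simp

end IsBernoulli

def unitVec {D : ℕ} (d : Fin D × Bool) : Fin D → ℤ :=
  Pi.single d.1 (if d.2 then 1 else -1)

theorem exists_unitVec_eq_of_norm1_eq_one {D : ℕ} {v : Fin D → ℤ} (hv : norm1 v = 1) :
    ∃ d, unitVec d = v := by
  have hle (s : Finset (Fin D)) : ∑ j ∈ s, |v j| ≤ 1 :=
    hv ▸ Finset.sum_le_sum_of_subset_of_nonneg s.subset_univ fun _ _ _ => abs_nonneg _
  obtain ⟨i, hi⟩ : ∃ i, v i ≠ 0 := by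
    by_contra! h
    simp [norm1, h] at hv
  have hvi : |v i| = 1 := le_antisymm (by simpa using hle {i}) (Int.one_le_abs hi)
  have hvj (j : Fin D) (hj : j ≠ i) : v j = 0 := by
    have := hle {i, j}
    rw [Finset.sum_pair hj.symm, hvi] at this
    exact abs_nonpos_iff.1 (by linarith)
  refine ⟨(i, decide (0 < v i)), funext fun j => ?_⟩
  rcases eq_or_ne j i with rfl | hj
  · rcases abs_cases (v j) with h | h <;> simp [unitVec] <;> omega
  · simp [unitVec, hj, hvj j hj]

theorem Fin.partialSum_sub {G : Type*} [AddCommGroup G] {n : ℕ} (f : ℕ → G) (j : Fin (n + 1)) :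
    Fin.partialSum (fun m : Fin n => f (m + 1) - f m) j = f j - f 0 := by
  induction j using Fin.induction with
  | zero => simp
  | succ m ih => simp [Fin.partialSum_succ, ih]

def copiesAlongPathEvent {D k : ℕ} (x : Fin k → Fin D → ℤ) : Set ((Fin D → ℤ) → Bool) :=
  {ω | ∃ y : ℕ → Fin D → ℤ, y 0 = 0 ∧ (∀ j, norm1 (y (j + 1) - y j) = 1) ∧
    Function.Injective (fun q : Fin k × ℕ => x q.1 + y q.2) ∧ ∀ i j, ω (x i + y j) = true}

theorem measure_copiesAlongPathEvent_le {D k : ℕ} {p : ℝ} {μ : Measure ((Fin D → ℤ) → Bool)}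
    (hμ : IsBernoulli p μ) (x : Fin k → Fin D → ℤ) (n : ℕ) :
    μ (copiesAlongPathEvent x) ≤ ((2 * D : ℕ) : ℝ≥0∞) ^ n * ENNReal.ofReal p ^ (k * (n + 1)) := by
  have := hμ.measure_le_card_mul_pow (σ := Fin n → Fin D × Bool) (ι := Fin k × Fin (n + 1))
    (fun s q => x q.1 + Fin.partialSum (unitVec ∘ s) q.2) (E := copiesAlongPathEvent x) ?_
  · simpa [mul_comm] using this
  rintro ω ⟨y, h0, hstep, hinj, hopen⟩
  choose s hs using fun m : Fin n => exists_unitVec_eq_of_norm1_eq_one (hstep m)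
  have hpath (j : Fin (n + 1)) : Fin.partialSum (unitVec ∘ s) j = y j := by
    simpa [Function.comp_def, hs, h0] using Fin.partialSum_sub y j
  refine ⟨s, ?_, fun q => ?_⟩
  · simp only [hpath]
    exact hinj.comp (Function.injective_id.prodMap Fin.val_injective)
  · simpa only [hpath] using hopen q.1 q.2

theorem natCast_mul_ofReal_pow_lt_one {a k : ℕ} {p : ℝ} (hk : k ≠ 0)
    (hp : p < (a : ℝ) ^ (-1 / k : ℝ)) : (a : ℝ≥0∞) * ENNReal.ofReal p ^ k < 1 := by
  rcases le_or_gt p 0 with hp0 | hp0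
  · simp [ENNReal.ofReal_eq_zero.2 hp0, zero_pow hk]
  rcases Nat.eq_zero_or_pos a with rfl | ha
  · simp
  have ha' : (0 : ℝ) < a := by exact_mod_cast ha
  rw [← ENNReal.ofReal_natCast, ← ENNReal.ofReal_pow hp0.le, ← ENNReal.ofReal_mul ha'.le,
    ENNReal.ofReal_lt_one]
  calc (a : ℝ) * p ^ k < a * ((a : ℝ) ^ (-1 / k : ℝ)) ^ k := by gcongr
    _ = 1 := by
      rw [← Real.rpow_natCast, ← Real.rpow_mul ha'.le, div_mul_cancel₀ _ (by exact_mod_cast hk),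
        Real.rpow_neg_one, mul_inv_cancel₀ ha'.ne']

theorem ENNReal.eq_zero_of_le_pow_mul {a b c : ℝ≥0∞} (hc : c < 1) (hb : b ≠ ⊤)
    (h : ∀ n : ℕ, a ≤ c ^ n * b) : a = 0 := by
  have hlim : Tendsto (fun n : ℕ => c ^ n * b) atTop (𝓝 0) := by
    simpa using
      ENNReal.Tendsto.mul_const (ENNReal.tendsto_pow_atTop_nhds_zero_of_lt_one hc) (Or.inr hb)
  exact nonpos_iff_eq_zero.1 (ge_of_tendsto' hlim h)

theorem congruent_copies_along_path_null_general (D k : ℕ) (hk : 1 ≤ k)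
    (x : Fin k → Fin D → ℤ)
    (p : ℝ) (hp : p < (2 * (D : ℝ)) ^ (-(1 : ℝ) / (k : ℝ)))
    (μ : Measure ((Fin D → ℤ) → Bool)) (hμ : IsBernoulli p μ) :
    μ {ω | ∃ y : ℕ → Fin D → ℤ,
        y 0 = 0 ∧
        (∀ j, norm1 (y (j + 1) - y j) = 1) ∧
        Function.Injective (fun q : Fin k × ℕ => x q.1 + y q.2) ∧
        ∀ i j, ω (x i + y j) = true} = 0 := by
  have hlt : ((2 * D : ℕ) : ℝ≥0∞) * ENNReal.ofReal p ^ k < 1 :=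
    natCast_mul_ofReal_pow_lt_one (by omega) (by exact_mod_cast hp)
  refine ENNReal.eq_zero_of_le_pow_mul hlt (b := ENNReal.ofReal p ^ k) (by simp) fun n => ?_
  calc μ (copiesAlongPathEvent x)
      ≤ ((2 * D : ℕ) : ℝ≥0∞) ^ n * ENNReal.ofReal p ^ (k * (n + 1)) :=
        measure_copiesAlongPathEvent_le hμ x n
    _ = (((2 * D : ℕ) : ℝ≥0∞) * ENNReal.ofReal p ^ k) ^ n * ENNReal.ofReal p ^ k := by ring

/-- If `x₁, …, x_k ∈ ℤ^D` are distinct and `p < (2D)^{-1/k}`, then the event that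
there is a singly-infinite self-avoiding path `0 = y₀, y₁, …` such that the sites
`x_i + y_j` are pairwise distinct and all open has `P_p`-probability zero. -/
theorem congruent_copies_along_path_null (D k : ℕ) (hD : 1 ≤ D) (hk : 1 ≤ k)
    (x : Fin k → Fin D → ℤ) (hx : Function.Injective x)
    (p : ℝ) (hp : p < (2 * (D : ℝ)) ^ (-(1 : ℝ) / (k : ℝ)))
    (μ : Measure ((Fin D → ℤ) → Bool)) (hμ : IsBernoulli p μ) :
    μ {ω | ∃ y : ℕ → Fin D → ℤ,
        y 0 = 0 ∧
        (∀ j, norm1 (y (j + 1) - y j) = 1) ∧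
        Function.Injective (fun q : Fin k × ℕ => x q.1 + y q.2) ∧
        ∀ i j, ω (x i + y j) = true} = 0 :=
  congruent_copies_along_path_null_general D k hk x p hp μ hμ
end

section
/- (Periodic colouring.) For any integers d ≥ 1 and R ≥ 2d there exists a colouring α : Z^d → {0, 1, …, d} with the following properties: (a) α(x + R·y) = α(x) for all x, y ∈ Z^d; (b) for each j ∈ {0, 1, …, d}, every j-cluster of α with respect to the star-lattice G* has volume at most R^d; (c) the 0-clusters of α with respect to G* are precisely the cubes R·x + [−(d−1), d−1]^d for x ∈ Z^d. -/
/-- Star-lattice adjacency on `ℤ^d`: distinct sites at ℓ∞-distance at most 1. -/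
def StarAdj {d : ℕ} (x y : Fin d → ℤ) : Prop :=
  x ≠ y ∧ ∀ i, |x i - y i| ≤ 1

/-- `A` is a `q`-cluster of the colouring `α` with respect to the adjacency
relation `adj`: a (nonempty) connected component of the subgraph induced by the
sites of colour `q`. -/
def IsCluster {V Q : Type*} (adj : V → V → Prop) (α : V → Q) (q : Q) (A : Set V) :
    Prop :=
  A.Nonempty ∧ (∀ x ∈ A, α x = q) ∧
    (∀ x ∈ A, ∀ y ∈ A,
      Relation.ReflTransGen (fun a b => α a = q ∧ α b = q ∧ adj a b) x y) ∧
    (∀ x ∈ A, ∀ y, α y = q → adj x y → y ∈ A)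

/-!
Colour `0` is put on the cubes `R z + [-(d-1), d-1]^d`; since `2d ≤ R`, two different cubes are
at ℓ∞-distance at least `2`, so these cubes are exactly the `0`-clusters. A site `x` off the
cubes has a coordinate whose residue mod `R` lies outside `[0, d)`, so by pigeonhole some residue
`c ∈ [0, d)` is taken by no coordinate of `x`; `x` gets colour `c + 1` for the least such `c`.
A `(c + 1)`-cluster never meets the hyperplanes `{y | y i ≡ c [ZMOD R]}`, so it stays inside one
cell `R k + c + [1, R - 1]^d` of the grid they cut out.
-/

section Clusters

variable {V Q : Type*} {adj : V → V → Prop} {α : V → Q} {q : Q} {A B S : Set V} {a : V}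

theorem IsCluster.subset_of_forall_adj (hA : IsCluster adj α q A) (haA : a ∈ A) (haS : a ∈ S)
    (hS : ∀ u ∈ S, ∀ v, α v = q → adj u v → v ∈ S) : A ⊆ S := by
  intro x hx
  have hpath := hA.2.2.1 a haA x hx
  clear hx
  induction hpath with
  | refl => exact haS
  | tail _ hstep ih => exact hS _ ih _ hstep.2.1 hstep.2.2

theorem IsCluster.eq_of_mem (hA : IsCluster adj α q A) (hB : IsCluster adj α q B)
    (haA : a ∈ A) (haB : a ∈ B) : A = B :=
  (hA.subset_of_forall_adj haA haB hB.2.2.2).antisymm (hB.subset_of_forall_adj haB haA hA.2.2.2)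

end Clusters

section Boxes

variable {d : ℕ}

theorem reflTransGen_starAdj_of_mem_Icc {lo hi a b : Fin d → ℤ} (ha : a ∈ Set.Icc lo hi)
    (hb : b ∈ Set.Icc lo hi) :
    Relation.ReflTransGen
      (fun u v => u ∈ Set.Icc lo hi ∧ v ∈ Set.Icc lo hi ∧ StarAdj u v) a b := by
  obtain ⟨M, hM⟩ := Finite.exists_le fun i => |b i - a i|
  suffices ∀ n : ℕ, ∀ a ∈ Set.Icc lo hi, (∀ i, |b i - a i| ≤ n) →
      Relation.ReflTransGen
        (fun u v => u ∈ Set.Icc lo hi ∧ v ∈ Set.Icc lo hi ∧ StarAdj u v) a b from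
    this M.toNat a ha fun i => (hM i).trans (Int.self_le_toNat M)
  intro n
  induction n with
  | zero =>
    intro a _ h
    obtain rfl : a = b := funext fun i => by have := abs_le.1 (h i); omega
    exact .refl
  | succ n ih =>
    intro a ha h
    by_cases hab : a = b
    · subst hab; exact .refl
    obtain ⟨i₀, hi₀⟩ := Function.ne_iff.1 hab
    -- move every coordinate one step towards `b`
    set a' : Fin d → ℤ := fun i => max (a i - 1) (min (a i + 1) (b i)) with ha'
    have ha'mem : a' ∈ Set.Icc lo hi := by
      refine ⟨fun i => ?_, fun i => ?_⟩ <;>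
      · have h₁ : lo i ≤ a i := ha.1 i
        have h₂ : a i ≤ hi i := ha.2 i
        have h₃ : lo i ≤ b i := hb.1 i
        have h₄ : b i ≤ hi i := hb.2 i
        simp only [ha']; omega
    refine .head ⟨ha, ha'mem, fun he => hi₀ ?_, fun i => ?_⟩ (ih a' ha'mem fun i => ?_)
    · have := congrFun he i₀; simp only [ha'] at this; omega
    · rw [abs_le]; simp only [ha']; omega
    · have := abs_le.1 (h i); rw [abs_le]; simp only [ha']; push_cast at this ⊢; omega

theorem ncard_Icc_le_pow {lo hi : Fin d → ℤ} {K : ℕ} (h : ∀ i, hi i + 1 - lo i ≤ K) :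
    (Set.Icc lo hi).ncard ≤ K ^ d := by
  rw [← Finset.coe_Icc, Set.ncard_coe_finset, Pi.card_Icc]
  calc ∏ i, (Finset.Icc (lo i) (hi i)).card ≤ K ^ (Finset.univ : Finset (Fin d)).card :=
        Finset.prod_le_pow_card _ _ _ fun i _ => by rw [Int.card_Icc]; have := h i; omega
    _ = K ^ d := by rw [Finset.card_univ, Fintype.card_fin]

end Boxes

namespace PeriodicColouring

variable {d R : ℕ}

def cube (d R : ℕ) (z : Fin d → ℤ) : Set (Fin d → ℤ) :=
  Set.Icc (fun i => R * z i - (d - 1)) (fun i => R * z i + (d - 1))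

theorem mem_cube {y z : Fin d → ℤ} :
    y ∈ cube d R z ↔
      ∀ i, (R : ℤ) * z i - ((d : ℤ) - 1) ≤ y i ∧
        y i ≤ (R : ℤ) * z i + ((d : ℤ) - 1) := by
  simp only [cube, Set.mem_Icc, Pi.le_def, forall_and]

def cell (R : ℕ) (c : ℤ) (k : Fin d → ℤ) : Set (Fin d → ℤ) :=
  Set.Icc (fun i => R * k i + c + 1) (fun i => R * k i + c + R - 1)

def missedResidues (d R : ℕ) (x : Fin d → ℤ) : Finset (Fin d) :=
  Finset.univ.filter fun c => ∀ i, x i % R ≠ c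

-- The final `else 0` is never reached, by `missedResidues_nonempty`.
open Classical in
noncomputable def colour (d R : ℕ) (x : Fin d → ℤ) : Fin (d + 1) :=
  if ∃ z, x ∈ cube d R z then 0
  else if h : (missedResidues d R x).Nonempty then ((missedResidues d R x).min' h).succ else 0

theorem add_smul_mem_cube {x y z : Fin d → ℤ} :
    x + (R : ℤ) • y ∈ cube d R z ↔ x ∈ cube d R (z - y) := by
  simp only [mem_cube, Pi.add_apply, Pi.smul_apply, Pi.sub_apply, smul_eq_mul, mul_sub]
  refine forall_congr' fun i => ?_
  constructor <;> intro h <;> constructor <;> linarith [h.1, h.2]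

theorem missedResidues_add_smul (x y : Fin d → ℤ) :
    missedResidues d R (x + (R : ℤ) • y) = missedResidues d R x := by
  simp only [missedResidues, Pi.add_apply, Pi.smul_apply, smul_eq_mul,
    Int.add_mul_emod_self_left]

theorem colour_add_smul (x y : Fin d → ℤ) :
    colour d R (x + (R : ℤ) • y) = colour d R x := by
  have hcube : (∃ z, x + (R : ℤ) • y ∈ cube d R z) ↔ ∃ z, x ∈ cube d R z :=
    ⟨fun ⟨z, h⟩ => ⟨z - y, add_smul_mem_cube.1 h⟩,
      fun ⟨z, h⟩ => ⟨z + y, add_smul_mem_cube.2 (by rwa [add_sub_cancel_right])⟩⟩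
  unfold colour
  by_cases h : ∃ z, x ∈ cube d R z
  · rw [if_pos (hcube.2 h), if_pos h]
  · rw [if_neg (mt hcube.1 h), if_neg h]
    simp only [missedResidues_add_smul]

theorem missedResidues_nonempty {x : Fin d → ℤ} (hx : ∀ z, x ∉ cube d R z) :
    (missedResidues d R x).Nonempty := by
  by_contra hempty
  have hit : ∀ c : Fin d, ∃ i, x i % R = c := by
    simpa [missedResidues, Finset.filter_eq_empty_iff] using hempty
  choose f hf using hit
  have hsurj : f.Surjective := Finite.surjective_of_injective fun c c' h =>
    Fin.ext (by exact_mod_cast (hf c).symm.trans (h ▸ hf c'))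
  refine hx (fun i => x i / R) (mem_cube.2 fun i => ?_)
  obtain ⟨c, rfl⟩ := hsurj i
  have := Int.mul_ediv_add_emod (x (f c)) R
  have := hf c
  have := c.isLt
  omega

theorem colour_eq_zero_iff {x : Fin d → ℤ} : colour d R x = 0 ↔ ∃ z, x ∈ cube d R z := by
  unfold colour
  split_ifs with hcube hne
  · simp [hcube]
  · simp [hcube, Fin.succ_ne_zero]
  · exact absurd (missedResidues_nonempty (not_exists.1 hcube)) hne

theorem emod_ne_of_colour_eq_succ {x : Fin d → ℤ} {c : Fin d} (hx : colour d R x = c.succ)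
    (i : Fin d) : x i % R ≠ c := by
  unfold colour at hx
  split_ifs at hx with hcube hne
  · exact absurd hx.symm (Fin.succ_ne_zero c)
  · rw [Fin.succ_inj] at hx
    subst hx
    exact (Finset.mem_filter.1 (Finset.min'_mem _ hne)).2 i
  · exact absurd hx.symm (Fin.succ_ne_zero c)

theorem mem_cube_of_starAdj (hR : 2 * d ≤ R) {y y' z z' : Fin d → ℤ} (hy : y ∈ cube d R z)
    (hy' : y' ∈ cube d R z') (hadj : StarAdj y y') : y' ∈ cube d R z := by
  rw [mem_cube] at hy hy' ⊢
  intro i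
  have hyy' := abs_le.1 (hadj.2 i)
  obtain ⟨hy₁, hy₂⟩ := hy i
  obtain ⟨hy'₁, hy'₂⟩ := hy' i
  have hR' : 2 * (d : ℤ) ≤ R := by exact_mod_cast hR
  -- cubes with different centres are more than one step apart
  have hz : z' i = z i := by
    rcases lt_trichotomy (z' i) (z i) with h | h | h
    · nlinarith
    · exact h
    · nlinarith
  rw [← hz]
  exact hy' i

theorem isCluster_cube (hR : 2 * d ≤ R) (z : Fin d → ℤ) :
    IsCluster StarAdj (colour d R) 0 (cube d R z) := by
  refine ⟨⟨fun i => R * z i, mem_cube.2 fun i => ?_⟩,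
    fun x hx => colour_eq_zero_iff.2 ⟨z, hx⟩, fun x hx y hy => ?_, fun x hx y hy hadj => ?_⟩
  · have := i.pos
    omega
  · refine Relation.ReflTransGen.mono ?_ _ _ (reflTransGen_starAdj_of_mem_Icc hx hy)
    rintro u v ⟨hu, hv, huv⟩
    exact ⟨colour_eq_zero_iff.2 ⟨z, hu⟩, colour_eq_zero_iff.2 ⟨z, hv⟩, huv⟩
  · obtain ⟨z', hz'⟩ := colour_eq_zero_iff.1 hy
    exact mem_cube_of_starAdj hR hx hz' hadj

theorem isCluster_zero_iff (hR : 2 * d ≤ R) {A : Set (Fin d → ℤ)} :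
    IsCluster StarAdj (colour d R) 0 A ↔ ∃ z, A = cube d R z := by
  constructor
  · intro hA
    obtain ⟨a, ha⟩ := hA.1
    obtain ⟨z, hz⟩ := colour_eq_zero_iff.1 (hA.2.1 a ha)
    exact ⟨z, hA.eq_of_mem (isCluster_cube hR z) ha hz⟩
  · rintro ⟨z, rfl⟩
    exact isCluster_cube hR z

theorem mul_add_emod_eq {c : ℤ} (hc₀ : 0 ≤ c) (hcR : c < R) (m : ℤ) :
    (R * m + c) % R = c := by
  rw [add_comm, Int.add_mul_emod_self_left, Int.emod_eq_of_lt hc₀ hcR]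

theorem mem_cell_of_starAdj {c : ℤ} (hc₀ : 0 ≤ c) (hcR : c < R) {k u v : Fin d → ℤ}
    (hu : u ∈ cell R c k) (hv : ∀ i, v i % R ≠ c) (huv : StarAdj u v) : v ∈ cell R c k := by
  refine ⟨fun i => ?_, fun i => ?_⟩ <;>
  · have := abs_le.1 (huv.2 i)
    have hu₁ : R * k i + c + 1 ≤ u i := hu.1 i
    have hu₂ : u i ≤ R * k i + c + R - 1 := hu.2 i
    have hlo : v i ≠ R * k i + c := fun h => hv i (h ▸ mul_add_emod_eq hc₀ hcR (k i))
    have hhi : v i ≠ R * (k i + 1) + c :=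
      fun h => hv i (h ▸ mul_add_emod_eq hc₀ hcR (k i + 1))
    simp only [mul_add] at hhi
    simp only
    omega

theorem mem_cell_self {c : ℤ} (hc₀ : 0 ≤ c) (hcR : c < R) {a : Fin d → ℤ}
    (ha : ∀ i, a i % R ≠ c) :
    a ∈ cell R c (fun i => (a i - c) / R) := by
  refine ⟨fun i => ?_, fun i => ?_⟩ <;>
  · have hdiv := Int.mul_ediv_add_emod (a i - c) R
    have hnonneg := Int.emod_nonneg (a i - c) (by omega : (R : ℤ) ≠ 0)
    have hlt := Int.emod_lt_of_pos (a i - c) (by omega : (0 : ℤ) < R)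
    have hne : (a i - c) % R ≠ 0 := fun h0 => ha i (by
      rw [show a i = R * ((a i - c) / R) + c by omega]
      exact mul_add_emod_eq hc₀ hcR _)
    simp only
    omega

theorem exists_subset_cell_of_isCluster (hdR : d ≤ R) {c : Fin d} {A : Set (Fin d → ℤ)}
    (hA : IsCluster StarAdj (colour d R) c.succ A) : ∃ k, A ⊆ cell R c k := by
  obtain ⟨a, ha⟩ := hA.1
  have hc₀ : (0 : ℤ) ≤ c := by omega
  have hcR : (c : ℤ) < R := by have := c.isLt; omega
  exact ⟨_, hA.subset_of_forall_adj ha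
    (mem_cell_self hc₀ hcR (emod_ne_of_colour_eq_succ (hA.2.1 a ha)))
    fun u hu v hv huv => mem_cell_of_starAdj hc₀ hcR hu (emod_ne_of_colour_eq_succ hv) huv⟩

theorem finite_and_ncard_le_of_isCluster (hR : 2 * d ≤ R) {j : Fin (d + 1)}
    {A : Set (Fin d → ℤ)} (hA : IsCluster StarAdj (colour d R) j A) :
    A.Finite ∧ A.ncard ≤ R ^ d := by
  obtain ⟨lo, hi, hsub, hside⟩ :
      ∃ lo hi : Fin d → ℤ, A ⊆ Set.Icc lo hi ∧ ∀ i, hi i + 1 - lo i ≤ R := by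
    cases j using Fin.cases with
    | zero =>
      obtain ⟨z, rfl⟩ := (isCluster_zero_iff hR).1 hA
      exact ⟨_, _, subset_rfl, fun i => by omega⟩
    | succ c =>
      obtain ⟨k, hk⟩ := exists_subset_cell_of_isCluster (by omega) hA
      exact ⟨_, _, hk, fun i => by omega⟩
  exact ⟨(Set.finite_Icc lo hi).subset hsub,
    (Set.ncard_le_ncard hsub (Set.finite_Icc lo hi)).trans (ncard_Icc_le_pow hside)⟩

end PeriodicColouring

theorem periodic_colouring_general (d R : ℕ) (hR : 2 * d ≤ R) :
    ∃ α : (Fin d → ℤ) → Fin (d + 1),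
      (∀ x y : Fin d → ℤ, α (x + (R : ℤ) • y) = α x) ∧
      (∀ (j : Fin (d + 1)) (A : Set (Fin d → ℤ)),
        IsCluster StarAdj α j A → A.Finite ∧ A.ncard ≤ R ^ d) ∧
      (∀ A : Set (Fin d → ℤ),
        IsCluster StarAdj α 0 A ↔
          ∃ x : Fin d → ℤ,
            A = {z | ∀ i, (R : ℤ) * x i - ((d : ℤ) - 1) ≤ z i ∧
                          z i ≤ (R : ℤ) * x i + ((d : ℤ) - 1)}) :=
  ⟨PeriodicColouring.colour d R, PeriodicColouring.colour_add_smul,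
    fun _ _ => PeriodicColouring.finite_and_ncard_le_of_isCluster hR, fun _ => by
      simp only [PeriodicColouring.isCluster_zero_iff hR, Set.ext_iff,
        PeriodicColouring.mem_cube, Set.mem_ofPred_eq]⟩

/-- Periodic colouring. For `d ≥ 1` and `R ≥ 2d` there is a colouring
`α : ℤ^d → {0, 1, …, d}` such that: (a) `α` is `R`-periodic in each dimension;
(b) every `j`-cluster with respect to the star-lattice has volume at most `R^d`;
(c) the `0`-clusters with respect to the star-lattice are precisely the cubes
`R·x + [-(d-1), d-1]^d` for `x ∈ ℤ^d`. -/
theorem periodic_colouring (d R : ℕ) (hd : 1 ≤ d) (hR : 2 * d ≤ R) :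
    ∃ α : (Fin d → ℤ) → Fin (d + 1),
      (∀ x y : Fin d → ℤ, α (x + (R : ℤ) • y) = α x) ∧
      (∀ (j : Fin (d + 1)) (A : Set (Fin d → ℤ)),
        IsCluster StarAdj α j A → A.Finite ∧ A.ncard ≤ R ^ d) ∧
      (∀ A : Set (Fin d → ℤ),
        IsCluster StarAdj α 0 A ↔
          ∃ x : Fin d → ℤ,
            A = {z | ∀ i, (R : ℤ) * x i - ((d : ℤ) - 1) ≤ z i ∧
                          z i ≤ (R : ℤ) * x i + ((d : ℤ) - 1)}) :=
  periodic_colouring_general d R hR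
end

section
/- Let D ≥ 2 and let f : Z^2 → Z^D be a 1-Lipschitz injection (into the full lattice). Then for every (i, j) ∈ Z^2 one has f(i+1, j+1) − f(i, j+1) = f(i+1, j) − f(i, j) and f(i+1, j+1) − f(i+1, j) = f(i, j+1) − f(i, j); consequently, for any distinct i, i′ ∈ Z the images under f of the two vertical lines {(i, j) : j ∈ Z} and {(i′, j) : j ∈ Z} are disjoint self-avoiding paths that are translates of each other. -/
section UnitVectors

variable {n : ℕ}

lemma norm1_pos {x : Fin n → ℤ} (hx : x ≠ 0) : 0 < norm1 x := by
  obtain ⟨i, hi⟩ := Function.ne_iff.mp hx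
  exact (abs_pos.mpr hi).trans_le
    (Finset.single_le_sum (fun j _ => abs_nonneg (x j)) (Finset.mem_univ i))

lemma norm1_sub_eq_one {u v : Fin n → ℤ} (huv : u ≠ v) (h : norm1 (u - v) ≤ 1) :
    norm1 (u - v) = 1 := by
  have := norm1_pos (sub_ne_zero.mpr huv)
  omega

lemma abs_le_one_of_norm1_eq_one {x : Fin n → ℤ} (h : norm1 x = 1) (i : Fin n) : |x i| ≤ 1 :=
  h ▸ Finset.single_le_sum (fun j _ => abs_nonneg (x j)) (Finset.mem_univ i)

lemma dotProduct_self_eq_one {x : Fin n → ℤ} (h : norm1 x = 1) : x ⬝ᵥ x = 1 := by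
  rw [← h]
  refine Finset.sum_congr rfl fun i _ => ?_
  rcases Int.abs_le_one_iff.mp (abs_le_one_of_norm1_eq_one h i) with hi | hi | hi <;> simp [hi]

lemma abs_dotProduct_le_one {u v : Fin n → ℤ} (hu : norm1 u = 1) (hv : norm1 v = 1) :
    |u ⬝ᵥ v| ≤ 1 :=
  calc |u ⬝ᵥ v| ≤ ∑ i, |u i * v i| := Finset.abs_sum_le_sum_abs _ _
    _ ≤ ∑ i, |v i| := Finset.sum_le_sum fun i _ => by
        rw [abs_mul]
        exact mul_le_of_le_one_left (abs_nonneg _) (abs_le_one_of_norm1_eq_one hu i)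
    _ = 1 := hv

lemma eq_of_dotProduct_eq_one {u v : Fin n → ℤ} (hu : norm1 u = 1) (hv : norm1 v = 1)
    (h : u ⬝ᵥ v = 1) : u = v := by
  have : (u - v) ⬝ᵥ (u - v) = 0 := by
    rw [sub_dotProduct, dotProduct_sub, dotProduct_sub, dotProduct_comm v u,
      dotProduct_self_eq_one hu, dotProduct_self_eq_one hv, h]
    norm_num
  exact sub_eq_zero.mp (dotProduct_self_eq_zero.mp this)

lemma dotProduct_add_self_of_norm1_eq_one {s t : Fin n → ℤ} (hs : norm1 s = 1)
    (ht : norm1 t = 1) : (s + t) ⬝ᵥ (s + t) = 2 + 2 * s ⬝ᵥ t := by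
  rw [add_dotProduct, dotProduct_add, dotProduct_add, dotProduct_self_eq_one hs,
    dotProduct_self_eq_one ht, dotProduct_comm t s]
  ring

lemma eq_of_add_eq_add_of_norm1_eq_one {s t s' t' : Fin n → ℤ}
    (hs : norm1 s = 1) (ht : norm1 t = 1) (hs' : norm1 s' = 1) (ht' : norm1 t' = 1)
    (hsum : s + t = s' + t') (hne : s ≠ s') (hw : s + t ≠ 0) :
    t = s' ∧ t' = s := by
  have hdot : s ⬝ᵥ t = s' ⬝ᵥ t' := by
    have := congrArg (fun w => w ⬝ᵥ w) hsum
    simp only [dotProduct_add_self_of_norm1_eq_one hs ht,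
      dotProduct_add_self_of_norm1_eq_one hs' ht'] at this
    omega
  have hst_ne_one : s ⬝ᵥ t ≠ 1 := fun h => hne <| by
    have h2 : s + s = s' + s' := by
      rwa [← eq_of_dotProduct_eq_one hs ht h, ← eq_of_dotProduct_eq_one hs' ht' (hdot ▸ h)]
        at hsum
    funext i
    have := congrFun h2 i
    simp only [Pi.add_apply] at this
    omega
  have hst_ne_neg_one : s ⬝ᵥ t ≠ -1 := fun h => hw <| dotProduct_self_eq_zero.mp <| by
    rw [dotProduct_add_self_of_norm1_eq_one hs ht, h]
    norm_num
  have hst := abs_le.mp (abs_dotProduct_le_one hs ht)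
  have hss' := abs_le.mp (abs_dotProduct_le_one hs hs')
  have hts' := abs_le.mp (abs_dotProduct_le_one ht hs')
  have hss'_ne_one : s ⬝ᵥ s' ≠ 1 := fun h => hne (eq_of_dotProduct_eq_one hs hs' h)
  -- the bounds above force `s ⬝ᵥ t = s' ⬝ᵥ t' = 0`, so pairing `hsum` with `s'` gives:
  have hsum_s' : s ⬝ᵥ s' + t ⬝ᵥ s' = 1 := by
    have := congrArg (· ⬝ᵥ s') hsum
    simp only [add_dotProduct, dotProduct_self_eq_one hs', dotProduct_comm t' s'] at this
    omega
  have ht_eq : t = s' := eq_of_dotProduct_eq_one ht hs' (by omega)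
  refine ⟨ht_eq, ?_⟩
  rw [ht_eq, add_comm] at hsum
  exact (add_left_cancel hsum).symm

end UnitVectors

lemma Function.Periodic.eq_of_period_one {α : Type*} {φ : ℤ → α} (h : Function.Periodic φ 1)
    (a b : ℤ) : φ a = φ b := by
  simpa using (h.int_mul a 0).trans (h.int_mul b 0).symm

lemma exists_translate_of_vertical_increments_eq {M : Type*} [AddCommGroup M] {g : ℤ × ℤ → M}
    (hg : ∀ i j : ℤ, g (i + 1, j + 1) - g (i + 1, j) = g (i, j + 1) - g (i, j)) (i i' : ℤ) :
    ∃ v : M, ∀ j : ℤ, g (i', j) = g (i, j) + v := by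
  let Δ : ℤ → ℤ → M := fun i j => g (i, j + 1) - g (i, j)
  have hΔ : Δ i' = Δ i := Function.Periodic.eq_of_period_one (fun i => funext (hg i)) i' i
  have hper : Function.Periodic (fun j => g (i', j) - g (i, j)) 1 := fun j => by
    rw [sub_eq_sub_iff_sub_eq_sub]
    exact congrFun hΔ j
  exact ⟨g (i', 0) - g (i, 0), fun j => eq_add_of_sub_eq' (hper.eq_of_period_one j 0)⟩

section LipschitzInjection

variable {D : ℕ} {f : ℤ × ℤ → (Fin D → ℤ)}

lemma norm1_sub_eq_one_of_adjacent (hinj : Function.Injective f)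
    (hlip : ∀ x y : ℤ × ℤ, |x.1 - y.1| + |x.2 - y.2| = 1 → norm1 (f x - f y) ≤ 1)
    {x y : ℤ × ℤ} (h : |x.1 - y.1| + |x.2 - y.2| = 1) : norm1 (f x - f y) = 1 :=
  norm1_sub_eq_one (hinj.ne fun hxy => by simp [hxy] at h) (hlip x y h)

lemma image_unit_square_parallelogram (hinj : Function.Injective f)
    (hlip : ∀ x y : ℤ × ℤ, |x.1 - y.1| + |x.2 - y.2| = 1 → norm1 (f x - f y) ≤ 1)
    (i j : ℤ) :
    f (i + 1, j + 1) - f (i, j + 1) = f (i + 1, j) - f (i, j) ∧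
      f (i + 1, j + 1) - f (i + 1, j) = f (i, j + 1) - f (i, j) := by
  have edge : ∀ x y : ℤ × ℤ, |x.1 - y.1| + |x.2 - y.2| = 1 → norm1 (f x - f y) = 1 :=
    fun _ _ => norm1_sub_eq_one_of_adjacent hinj hlip
  have hne : f (i + 1, j) - f (i, j) ≠ f (i, j + 1) - f (i, j) := fun h => by
    simpa using hinj (sub_left_inj.mp h)
  have hw : f (i + 1, j) - f (i, j) + (f (i + 1, j + 1) - f (i + 1, j)) ≠ 0 := by
    rw [add_comm, sub_add_sub_cancel, sub_ne_zero]
    exact hinj.ne (by simp)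
  obtain ⟨h₁, h₂⟩ := eq_of_add_eq_add_of_norm1_eq_one
    (edge (i + 1, j) (i, j) (by simp)) (edge (i + 1, j + 1) (i + 1, j) (by simp))
    (edge (i, j + 1) (i, j) (by simp)) (edge (i + 1, j + 1) (i, j + 1) (by simp))
    (by abel) hne hw
  exact ⟨h₂, h₁⟩

end LipschitzInjection

theorem one_lipschitz_injection_rigidity_general (D : ℕ)
    (f : ℤ × ℤ → (Fin D → ℤ)) (hinj : Function.Injective f)
    (hlip : ∀ x y : ℤ × ℤ, |x.1 - y.1| + |x.2 - y.2| = 1 →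
      norm1 (f x - f y) ≤ 1) :
    (∀ i j : ℤ,
      f (i + 1, j + 1) - f (i, j + 1) = f (i + 1, j) - f (i, j) ∧
      f (i + 1, j + 1) - f (i + 1, j) = f (i, j + 1) - f (i, j)) ∧
    ∀ i i' : ℤ, i ≠ i' →
      (Function.Injective fun j : ℤ => f (i, j)) ∧
      (∀ j : ℤ, norm1 (f (i, j + 1) - f (i, j)) = 1) ∧
      (∃ v : Fin D → ℤ, ∀ j : ℤ, f (i', j) = f (i, j) + v) ∧
      (∀ j j' : ℤ, f (i, j) ≠ f (i', j')) := by
  have hsquare := image_unit_square_parallelogram hinj hlip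
  refine ⟨hsquare, fun i i' hii' => ⟨hinj.comp (Prod.mk_right_injective i), ?_, ?_, ?_⟩⟩
  · exact fun j => norm1_sub_eq_one_of_adjacent hinj hlip (by simp)
  · exact exists_translate_of_vertical_increments_eq (fun i j => (hsquare i j).2) i i'
  · exact fun j j' h => hii' (congrArg Prod.fst (hinj h))

/-- Rigidity of 1-Lipschitz injections of `ℤ²` into `ℤ^D`: the images of the four
edges of any unit square come in equal opposite pairs, and consequently the
images of any two distinct vertical lines are disjoint self-avoiding paths that
are translates of each other. -/
theorem one_lipschitz_injection_rigidity (D : ℕ) (hD : 2 ≤ D)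
    (f : ℤ × ℤ → (Fin D → ℤ)) (hinj : Function.Injective f)
    (hlip : ∀ x y : ℤ × ℤ, |x.1 - y.1| + |x.2 - y.2| = 1 →
      norm1 (f x - f y) ≤ 1) :
    (∀ i j : ℤ,
      f (i + 1, j + 1) - f (i, j + 1) = f (i + 1, j) - f (i, j) ∧
      f (i + 1, j + 1) - f (i + 1, j) = f (i, j + 1) - f (i, j)) ∧
    ∀ i i' : ℤ, i ≠ i' →
      (Function.Injective fun j : ℤ => f (i, j)) ∧
      (∀ j : ℤ, norm1 (f (i, j + 1) - f (i, j)) = 1) ∧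
      (∃ v : Fin D → ℤ, ∀ j : ℤ, f (i', j) = f (i, j) + v) ∧
      (∀ j j' : ℤ, f (i, j) ≠ f (i', j')) :=
  one_lipschitz_injection_rigidity_general D f hinj hlip
end

section
/- Let D ≥ 1 and p < 1, and let B be the event that there exist sites x₁, x₂, x₃, … ∈ Z^D and a singly-infinite self-avoiding path 0 = y₀, y₁, y₂, … in Z^D such that the sites x_i + y_j, for all i ≥ 1 and j ≥ 0, are pairwise distinct and all open. Then P_p(B) = 0. -/
/-!
Fix `m` and the first `m` translates `x₁, …, x_m`. The first `k` steps of the path are unit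
vectors, hence lie in the finite box `B = [-1, 1]^D`, so there are at most `#B ^ k` candidate
prefixes, and for each of them the `m (k + 1)` distinct sites `x_i + y_j` are all open with
probability at most `p ^ (m (k + 1))`. Choosing `m` with `#B p^m < 1`, the union bound
`(#B p^m)^k` tends to `0` as `k → ∞`; countably many choices of `x₁, …, x_m` remain.
-/

open MeasureTheory

open Finset ENNReal

lemma ENNReal.eq_zero_of_le_pow {a r : ℝ≥0∞} (hr : r < 1) (h : ∀ k : ℕ, a ≤ r ^ k) : a = 0 :=
  le_antisymm (ge_of_tendsto' (ENNReal.tendsto_pow_atTop_nhds_zero_of_lt_one hr) h) bot_le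

lemma abs_le_norm1 {n : ℕ} (v : Fin n → ℤ) (i : Fin n) : |v i| ≤ norm1 v :=
  single_le_sum (f := fun j => |v j|) (fun j _ => abs_nonneg (v j)) (mem_univ i)

lemma mem_Icc_of_norm1_eq_one {n : ℕ} {v : Fin n → ℤ} (hv : norm1 v = 1) : v ∈ Icc (-1) 1 :=
  mem_Icc.2 (forall_and.1 fun i => abs_le.1 (hv ▸ abs_le_norm1 v i))

namespace IsBernoulli

variable {S : Type*} {p : ℝ} {μ : Measure (S → Bool)}

lemma measure_forall_mem_open (hμ : IsBernoulli p μ) (A : Finset S) :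
    μ {ω | ∀ s ∈ A, ω s = true} = ENNReal.ofReal p ^ #A := by
  simpa using hμ.2 A fun _ => true

lemma measure_injective_open_le (hμ : IsBernoulli p μ) {α : Type*} [Fintype α] (f : α → S) :
    μ {ω | Function.Injective f ∧ ∀ a, ω (f a) = true} ≤ ENNReal.ofReal p ^ Fintype.card α := by
  classical
  by_cases hf : Function.Injective f
  · calc μ {ω | Function.Injective f ∧ ∀ a, ω (f a) = true}
        ≤ μ {ω | ∀ s ∈ univ.image f, ω s = true} :=
          measure_mono fun ω hω => by simpa using hω.2
      _ = ENNReal.ofReal p ^ Fintype.card α := by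
          rw [hμ.measure_forall_mem_open, card_image_of_injective _ hf, card_univ]
  · simp [hf]

lemma measure_biUnion_injective_open_le (hμ : IsBernoulli p μ) {ι α : Type*} [Fintype α]
    (W : Finset ι) (f : ι → α → S) :
    μ (⋃ w ∈ W, {ω | Function.Injective (f w) ∧ ∀ a, ω (f w a) = true})
      ≤ #W * ENNReal.ofReal p ^ Fintype.card α :=
  calc _ ≤ ∑ w ∈ W, μ {ω | Function.Injective (f w) ∧ ∀ a, ω (f w a) = true} :=
        measure_biUnion_finset_le W _
    _ ≤ ∑ _w ∈ W, ENNReal.ofReal p ^ Fintype.card α :=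
        sum_le_sum fun w _ => hμ.measure_injective_open_le (f w)
    _ = #W * ENNReal.ofReal p ^ Fintype.card α := by rw [sum_const, nsmul_eq_mul]

end IsBernoulli

section Translates

variable {S : Type*} [AddCommGroup S]

/-- The sites `x i + y j`, `i < m`, `j ≤ k`, where `y` is the walk from `0` with steps `w`. -/
def translatedWalk {m k : ℕ} (x : Fin m → S) (w : Fin k → S) (q : Fin m × Fin (k + 1)) : S :=
  x q.1 + Fin.partialSum w q.2

def translatesOpen (m : ℕ) (x : Fin m → S) (B : Finset S) (k : ℕ) : Set (S → Bool) :=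
  ⋃ w ∈ Fintype.piFinset fun _ : Fin k => B,
    {ω | Function.Injective (translatedWalk x w) ∧ ∀ q, ω (translatedWalk x w q) = true}

lemma IsBernoulli.measure_translatesOpen_le {p : ℝ} {μ : Measure (S → Bool)}
    (hμ : IsBernoulli p μ) (hp : p ≤ 1) (m : ℕ) (x : Fin m → S) (B : Finset S) (k : ℕ) :
    μ (translatesOpen m x B k) ≤ (#B * ENNReal.ofReal p ^ m) ^ k :=
  calc μ (translatesOpen m x B k)
      ≤ #B ^ k * ENNReal.ofReal p ^ (m * k + m) := by
        simpa [translatesOpen, mul_add, Fintype.card_piFinset] using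
          hμ.measure_biUnion_injective_open_le (Fintype.piFinset fun _ : Fin k => B)
            (translatedWalk x)
    _ ≤ #B ^ k * ENNReal.ofReal p ^ (m * k) := by
        gcongr _ * ?_
        exact pow_le_pow_right_of_le_one' (ENNReal.ofReal_le_one.2 hp) (by omega)
    _ = (#B * ENNReal.ofReal p ^ m) ^ k := by rw [mul_pow, pow_mul]

lemma IsBernoulli.measure_iInter_translatesOpen {p : ℝ} {μ : Measure (S → Bool)}
    (hμ : IsBernoulli p μ) (hp : p ≤ 1) {m : ℕ} (x : Fin m → S) {B : Finset S}
    (hB : #B * ENNReal.ofReal p ^ m < 1) :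
    μ (⋂ k, translatesOpen m x B k) = 0 :=
  ENNReal.eq_zero_of_le_pow hB fun k =>
    (measure_mono (Set.iInter_subset _ k)).trans (hμ.measure_translatesOpen_le hp m x B k)

lemma mem_iInter_translatesOpen {ω : S → Bool} {B : Finset S} {x y : ℕ → S} (hy0 : y 0 = 0)
    (hstep : ∀ j, y (j + 1) - y j ∈ B) (hinj : Function.Injective fun q : ℕ × ℕ => x q.1 + y q.2)
    (hopen : ∀ i j, ω (x i + y j) = true) (m : ℕ) :
    ω ∈ ⋂ k, translatesOpen m (fun i : Fin m => x i) B k := by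
  refine Set.mem_iInter.2 fun k => Set.mem_biUnion (x := fun t : Fin k => -y t + y (t + 1)) ?_ ?_
  · simpa [Fintype.mem_piFinset, neg_add_eq_sub] using fun t : Fin k => hstep t
  have hwalk : Fin.partialSum (fun t : Fin k => -y t + y (t + 1)) = fun j : Fin (k + 1) => y j := by
    simpa [hy0] using Fin.partialSum_left_neg fun j : Fin (k + 1) => y j
  have hsites : translatedWalk (fun i : Fin m => x i) (fun t : Fin k => -y t + y (t + 1)) =
      (fun q : ℕ × ℕ => x q.1 + y q.2) ∘ Prod.map Fin.val Fin.val := by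
    funext q
    simp [translatedWalk, hwalk]
  rw [hsites]
  exact ⟨hinj.comp (Fin.val_injective.prodMap Fin.val_injective), fun q => hopen q.1 q.2⟩

end Translates

theorem translates_along_path_null_general (D : ℕ) (p : ℝ) (hp : p < 1)
    (μ : Measure ((Fin D → ℤ) → Bool)) (hμ : IsBernoulli p μ) :
    μ {ω | ∃ x : ℕ → Fin D → ℤ, ∃ y : ℕ → Fin D → ℤ,
        y 0 = 0 ∧
        (∀ j, norm1 (y (j + 1) - y j) = 1) ∧
        Function.Injective (fun q : ℕ × ℕ => x q.1 + y q.2) ∧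
        ∀ i j, ω (x i + y j) = true} = 0 := by
  set B : Finset (Fin D → ℤ) := Icc (-1) 1
  obtain ⟨m, hm⟩ : ∃ m : ℕ, #B * ENNReal.ofReal p ^ m < 1 :=
    (ENNReal.Tendsto.const_mul
      (ENNReal.tendsto_pow_atTop_nhds_zero_of_lt_one (ENNReal.ofReal_lt_one.2 hp))
      (Or.inr (natCast_ne_top _))).eventually_lt_const (by simp) |>.exists
  refine measure_mono_null ?_ (measure_iUnion_null fun x : Fin m → Fin D → ℤ =>
    hμ.measure_iInter_translatesOpen hp.le x hm)
  rintro ω ⟨x, y, hy0, hstep, hinj, hopen⟩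
  exact Set.mem_iUnion.2 ⟨_, mem_iInter_translatesOpen hy0
    (fun j => mem_Icc_of_norm1_eq_one (hstep j)) hinj hopen m⟩

/-- For `D ≥ 1` and `p < 1`: the event that there are sites `x₁, x₂, … ∈ ℤ^D` and a
singly-infinite self-avoiding path `0 = y₀, y₁, …` such that the sites `x_i + y_j`
are pairwise distinct and all open has `P_p`-probability zero. -/
theorem translates_along_path_null (D : ℕ) (hD : 1 ≤ D) (p : ℝ) (hp : p < 1)
    (μ : Measure ((Fin D → ℤ) → Bool)) (hμ : IsBernoulli p μ) :
    μ {ω | ∃ x : ℕ → Fin D → ℤ, ∃ y : ℕ → Fin D → ℤ,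
        y 0 = 0 ∧
        (∀ j, norm1 (y (j + 1) - y j) = 1) ∧
        Function.Injective (fun q : ℕ × ℕ => x q.1 + y q.2) ∧
        ∀ i j, ω (x i + y j) = true} = 0 :=
  translates_along_path_null_general D p hp μ hμ
end
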